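/- In the specific example V: w^2 + z^3 + x^5 y + t^{24} x y^5 = 0 over k[t] (weights (1,1,2,3) on (x,y,z,w), char k = 0), the point (t,x,y,z,w) = (0,0,1,0,0) is a singular point of V, while the corresponding variety U: s^2 + r^3 + p^5 q + p q^5 = 0 is smooth at every point of the chart q = 1 over t = 0; in particular, the equation s^2 + r^3 + p^5 + p = 0 in the coordinates (t,p,r,s) defines a variety with no singular points. -/
import Mathlib


open MvPolynomial

/- STATEMENT 18: For the example V : w² + z³ + x⁵y + t²⁴xy⁵ = 0 (weights
(1,1,2,3) on (x,y,z,w), char k = 0), the point (t,x,y,z,w) = (0,0,1,0,0)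
is singular: in the chart y = 1 the polynomial F = w² + z³ + x⁵ + t²⁴x
(variables X 0 = t, X 1 = x, X 2 = z, X 3 = w) and all its partial
derivatives vanish at the origin.  In contrast, U : s² + r³ + p⁵q + pq⁵ = 0
is smooth in the chart q = 1 over t = 0: G = s² + r³ + p⁵ + p (variables
X 0 = p, X 1 = r, X 2 = s) has no singular points. -/
theorem example_cE8_singular_and_smooth_model
    (k : Type*) [Field k] [CharZero k] :
    (∀ F : MvPolynomial (Fin 4) k,
      F = X 3 ^ 2 + X 2 ^ 3 + X 1 ^ 5 + X 0 ^ 24 * X 1 →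
      eval (fun _ => (0 : k)) F = 0 ∧
      ∀ i : Fin 4, eval (fun _ => (0 : k)) (pderiv i F) = 0) ∧
    (∀ G : MvPolynomial (Fin 3) k,
      G = X 2 ^ 2 + X 1 ^ 3 + X 0 ^ 5 + X 0 →
      ¬ ∃ v : Fin 3 → k, eval v G = 0 ∧ ∀ i : Fin 3, eval v (pderiv i G) = 0) := by
  constructor
  · rintro F rfl
    constructor
    · simp
    · intro i
      fin_cases i <;>
        simp [pderiv_X, Pi.single_apply]
  · rintro G rfl
    rintro ⟨v, hG, hd⟩
    have h0 := hd 0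
    have h1 := hd 1
    have h2 := hd 2
    simp [pderiv_X, Pi.single_apply] at h0 h1 h2 hG
    rw [h1, h2] at hG
    have hfac : v 0 * (v 0 ^ 4 + 1) = 0 := by linear_combination hG
    rcases mul_eq_zero.mp hfac with h | h
    · rw [h] at h0; norm_num at h0
    · have h4 : v 0 ^ 4 = -1 := by linear_combination h
      rw [h4] at h0; norm_num at h0
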